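/- Let G be a bipartite graph with auxiliary graph G⁺ defined on ordered pairs of distinct same-side vertices, where (u,v) ~ (v,u) and (u,v) ~ (z,w) whenever uw and vz are independent edges of G. If the complement of G admits a T-free orientation, then G⁺ is bipartite. -/

import Mathlib

namespace CocompBigraph

variable {V : Type*}

/-- `side` is a bipartition of the simple graph `G`: edges only join the two sides. -/
def IsBipartition (G : SimpleGraph V) (side : V → Bool) : Prop :=
  ∀ u v, G.Adj u v → side u ≠ side v

/-- Two edges `xy`, `x'y'` (with `x, x'` on one side and `y, y'` on the other) are
independent: they are disjoint and neither `xy'` nor `x'y` is an edge. -/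
def Indep (G : SimpleGraph V) (x y x' y' : V) : Prop :=
  G.Adj x y ∧ G.Adj x' y' ∧ x ≠ x' ∧ y ≠ y' ∧ ¬ G.Adj x y' ∧ ¬ G.Adj x' y

/-- `w` is a walk of length `n` in `G` (vertices `w 0, …, w n`). -/
def IsWalk (G : SimpleGraph V) (n : ℕ) (w : ℕ → V) : Prop :=
  ∀ i < n, G.Adj (w i) (w (i+1))

/-- Two walks of the same length `n`, beginning on the same side, are congruent if
for each `i` their `i`-th edges are independent. -/
def CongWalks (G : SimpleGraph V) (side : V → Bool) (n : ℕ) (w w' : ℕ → V) : Prop :=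
  side (w 0) = side (w' 0) ∧
  IsWalk G n w ∧ IsWalk G n w' ∧
  ∀ i < n, Indep G (w i) (w (i+1)) (w' i) (w' (i+1))

/-- `(a,b) Γ (f,g)`: there are congruent walks from `a` to `f` and from `b` to `g`. -/
def Gamma (G : SimpleGraph V) (side : V → Bool) (a b f g : V) : Prop :=
  ∃ n, ∃ w w' : ℕ → V, CongWalks G side n w w' ∧
    w 0 = a ∧ w' 0 = b ∧ w n = f ∧ w' n = g

/-- A pair of distinct vertices `u, v` is invertible if there are congruent walks
from `u` to `v` and from `v` to `u`. -/
def InvertiblePair (G : SimpleGraph V) (side : V → Bool) (u v : V) : Prop :=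
  u ≠ v ∧ Gamma G side u v v u

/-- A pair `(a,b)` is relevant if its implication class contains at least two pairs. -/
def Relevant (G : SimpleGraph V) (side : V → Bool) (a b : V) : Prop :=
  ∃ f g, Gamma G side a b f g ∧ (f, g) ≠ (a, b)

/-- An orientation of the complement of `G`: every pair of distinct vertices on the
same side gets exactly one direction (cross pairs stay undirected). -/
def IsOrientation (side : V → Bool) (O : V → V → Prop) : Prop :=
  (∀ u v, O u v → side u = side v ∧ u ≠ v) ∧
  (∀ u v, u ≠ v → side u = side v → (O u v ↔ ¬ O v u))

/-- The orientation `O` is `T`-free: no two independent edges of the bipartite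
complement agree in `O`. -/
def TFree (G : SimpleGraph V) (side : V → Bool) (O : V → V → Prop) : Prop :=
  ∀ x y x' y', side x = side x' → side y = side y' → side x ≠ side y →
    x ≠ x' → y ≠ y' → ¬ G.Adj x y → ¬ G.Adj x' y' →
    G.Adj x y' → G.Adj x' y → ¬ (O x x' ∧ O y y')

/-- The relation `O` has no directed cycle. -/
def OAcyclic (O : V → V → Prop) : Prop :=
  ∀ (n : ℕ) (w : ℕ → V), 0 < n → (∀ i < n, O (w i) (w (i+1))) → w 0 ≠ w n

/-- `G` has an `S`-free pair of orderings: linear orders of the two sides such that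
no two independent edges cross. -/
def SFreePair (G : SimpleGraph V) (side : V → Bool) : Prop :=
  ∃ lt : V → V → Prop,
    (∀ u v, lt u v → side u = side v ∧ u ≠ v) ∧
    (∀ u v, u ≠ v → side u = side v → (lt u v ↔ ¬ lt v u)) ∧
    (∀ u v w, lt u v → lt v w → lt u w) ∧
    (∀ u v w z, side u ≠ side w → lt u v → lt w z →
      G.Adj u z → G.Adj v w → (G.Adj u w ∨ G.Adj v z))

/-- An edge-asteroid: `2k+1` distinct edges `x i — y i` such that for each `i` there
is a walk joining the edges `e (i+k)` and `e (i+k+1)` (including both endpoints of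
each) containing no vertex adjacent to either end of `e i`. -/
def EdgeAsteroid (G : SimpleGraph V) (k : ℕ) (x y : ZMod (2*k+1) → V) : Prop :=
  1 ≤ k ∧
  (∀ i, G.Adj (x i) (y i)) ∧
  (∀ i j : ZMod (2*k+1), i ≠ j → (x i, y i) ≠ (x j, y j)) ∧
  ∀ i : ZMod (2*k+1), ∃ n, ∃ w : ℕ → V, IsWalk G n w ∧ 1 ≤ n ∧
    ((w 0 = x (i+k) ∧ w 1 = y (i+k)) ∨ (w 0 = y (i+k) ∧ w 1 = x (i+k))) ∧
    ((w (n-1) = y (i+k+1) ∧ w n = x (i+k+1)) ∨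
      (w (n-1) = x (i+k+1) ∧ w n = y (i+k+1))) ∧
    ∀ j ≤ n, ¬ G.Adj (w j) (x i) ∧ ¬ G.Adj (w j) (y i)

/-- An asteroid in a graph `H`: `2k+1` distinct vertices such that for each `i` there
is a path joining `v (i+k)` and `v (i+k+1)` none of whose vertices is a neighbour
of `v i`. -/
def Asteroid {W : Type*} (H : SimpleGraph W) (k : ℕ) (v : ZMod (2*k+1) → W) : Prop :=
  1 ≤ k ∧ Function.Injective v ∧
  ∀ i : ZMod (2*k+1), ∃ n, ∃ w : ℕ → W, IsWalk H n w ∧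
    w 0 = v (i+k) ∧ w n = v (i+(k+1)) ∧
    (∀ a ≤ n, ∀ b ≤ n, w a = w b → a = b) ∧
    ∀ j ≤ n, ¬ H.Adj (w j) (v i)

/-- The independence graph `I(G)`: vertices are the edges of `G` (oriented from side
`true` to side `false`), adjacent iff independent. -/
def IndepGraph (G : SimpleGraph V) (side : V → Bool) :
    SimpleGraph {p : V × V // G.Adj p.1 p.2 ∧ side p.1 = true} where
  Adj e f := Indep G e.1.1 e.1.2 f.1.1 f.1.2
  symm := by
    constructor
    rintro e f ⟨h1, h2, h3, h4, h5, h6⟩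
    exact ⟨h2, h1, h3.symm, h4.symm, h6, h5⟩
  loopless := by
    constructor
    rintro e ⟨_, _, h3, _⟩
    exact h3 rfl

/-- A graph is a comparability graph iff it has a transitive orientation. -/
def HasTransitiveOrientation {W : Type*} (H : SimpleGraph W) : Prop :=
  ∃ r : W → W → Prop,
    (∀ u v, r u v → H.Adj u v) ∧
    (∀ u v, H.Adj u v → (r u v ↔ ¬ r v u)) ∧
    (∀ u v w, r u v → r v w → r u w)

/-- The cycle `C_n` on vertex set `ZMod n`. -/
def cycleGraph (n : ℕ) : SimpleGraph (ZMod n) where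
  Adj i j := i ≠ j ∧ (j = i + 1 ∨ i = j + 1)
  symm := by constructor; rintro i j ⟨h, h'⟩; exact ⟨h.symm, h'.symm⟩
  loopless := by constructor; rintro i ⟨h, _⟩; exact h rfl

/-- `G` contains an induced cycle of length `n`. -/
def HasInducedCycle (G : SimpleGraph V) (n : ℕ) : Prop :=
  ∃ f : ZMod n → V, Function.Injective f ∧
    ∀ i j, G.Adj (f i) (f j) ↔ (cycleGraph n).Adj i j

/-- Adjacency of the auxiliary graph `G⁺` on ordered pairs:
`(u,v)` is adjacent to `(v,u)` and to every `(z,w)` such that `uw` and `vz` are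
independent edges of `G`. -/
def AuxAdj (G : SimpleGraph V) (p q : V × V) : Prop :=
  (q.1 = p.2 ∧ q.2 = p.1) ∨
  (G.Adj p.1 q.2 ∧ G.Adj p.2 q.1 ∧ p.1 ≠ p.2 ∧ q.1 ≠ q.2 ∧
    ¬ G.Adj p.1 q.1 ∧ ¬ G.Adj p.2 q.2)

/-- The auxiliary graph `G⁺`, on the set `F` of ordered pairs of distinct same-side
vertices, is bipartite (i.e. properly 2-colourable). -/
def AuxBipartite (G : SimpleGraph V) (side : V → Bool) : Prop :=
  ∃ c : {p : V × V // p.1 ≠ p.2 ∧ side p.1 = side p.2} → Bool,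
    ∀ p q, AuxAdj G p.1 q.1 → c p ≠ c q

/-- `G` is an interval containment bigraph. -/
def IntervalContainment (G : SimpleGraph V) (side : V → Bool) : Prop :=
  ∃ l r : V → ℝ, (∀ v, l v ≤ r v) ∧
    ∀ x y, side x = true → side y = false →
      (G.Adj x y ↔ (l x ≤ l y ∧ r y ≤ r x))

/-! Colour a pair `(u, v)` by whether the orientation directs it as `u → v`. Reversing a pair
flips its colour. If `uw` and `vz` are independent edges of `G`, then `uz` and `vw` are edges of
the bipartite complement, and `T`-freeness applied to them in both directions forces exactly one
of `u → v`, `z → w`; so adjacent pairs of `G⁺` get different colours. -/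

variable {G : SimpleGraph V} {side : V → Bool} {O : V → V → Prop}

theorem IsOrientation.swap_iff_not (hO : IsOrientation side O) {u v : V} (huv : u ≠ v)
    (hs : side u = side v) : O v u ↔ ¬ O u v := by
  rw [hO.2 u v huv hs, not_not]

theorem Indep.symm {x y x' y' : V} (h : Indep G x y x' y') : Indep G x' y' x y :=
  ⟨h.2.1, h.1, h.2.2.1.symm, h.2.2.2.1.symm, h.2.2.2.2.2, h.2.2.2.2.1⟩

theorem IsBipartition.side_eq_not (hbip : IsBipartition G side) {x y : V} (h : G.Adj x y) :
    side y = !side x := by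
  have := hbip x y h
  cases hx : side x <;> cases hy : side y <;> simp_all

theorem IsBipartition.side_eq_of_adj (hbip : IsBipartition G side) {x y x' y' : V}
    (h : G.Adj x y) (h' : G.Adj x' y') (hs : side x = side x') : side y = side y' := by
  rw [hbip.side_eq_not h, hbip.side_eq_not h', hs]

theorem TFree.not_and_of_indep (hbip : IsBipartition G side) (hT : TFree G side O)
    {x y x' y' : V} (h : Indep G x y x' y') (hs : side x = side x') :
    ¬ (O x x' ∧ O y' y) := by
  obtain ⟨hxy, hx'y', hxx', hyy', hxy', hx'y⟩ := h
  exact hT x y' x' y hs (hbip.side_eq_of_adj hx'y' hxy hs.symm) (hs ▸ hbip x' y' hx'y')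
    hxx' hyy'.symm hxy' hx'y hxy hx'y'

theorem TFree.iff_not_of_indep (hbip : IsBipartition G side) (hO : IsOrientation side O)
    (hT : TFree G side O) {x y x' y' : V} (h : Indep G x y x' y') (hs : side x = side x') :
    O x x' ↔ ¬ O y' y := by
  have hfwd := hT.not_and_of_indep hbip h hs
  have hbwd := hT.not_and_of_indep hbip h.symm hs.symm
  rw [hO.swap_iff_not h.2.2.1 hs,
    hO.swap_iff_not h.2.2.2.1.symm (hbip.side_eq_of_adj h.2.1 h.1 hs.symm)] at hbwd
  tauto

theorem TFree.iff_not_of_auxAdj (hbip : IsBipartition G side) (hO : IsOrientation side O)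
    (hT : TFree G side O) {p q : V × V} (hp : p.1 ≠ p.2) (hps : side p.1 = side p.2)
    (hpq : AuxAdj G p q) : O p.1 p.2 ↔ ¬ O q.1 q.2 := by
  rcases hpq with ⟨h₁, h₂⟩ | ⟨hpq₁, hpq₂, hp', hq, hn₁, hn₂⟩
  · rw [h₁, h₂, hO.swap_iff_not hp hps, not_not]
  · exact hT.iff_not_of_indep hbip hO ⟨hpq₁, hpq₂, hp', hq.symm, hn₁, hn₂⟩ hps

/-- if the complement of `G` admits a `T`-free orientation, then the
auxiliary graph `G⁺` is bipartite. -/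
theorem stmt_16 (G : SimpleGraph V) (side : V → Bool) (hbip : IsBipartition G side)
    (h : ∃ O : V → V → Prop, IsOrientation side O ∧ TFree G side O) :
    AuxBipartite G side := by
  classical
  obtain ⟨O, hO, hT⟩ := h
  refine ⟨fun p => decide (O p.1.1 p.1.2), fun p q hpq heq => ?_⟩
  have hflip := hT.iff_not_of_auxAdj hbip hO p.2.1 p.2.2 hpq
  exact iff_not_self ((decide_eq_decide.mp heq).symm.trans hflip)

end CocompBigraph
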